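/- In the N=2 selfish-mining model with γ1 = γ2 = 1/2, θ1 = θ2 = 1/3 and symmetric selfish Hashrates α1 = α2 = α, the profitable threshold is approximately 27%: if 0.28 ≤ α < 1/3 then R_A > α (selfish mining is profitable), while if 0 < α ≤ 0.26 then R_A < α (selfish mining is unprofitable). -/

import Mathlib

/-! For any tie-breaking parameters the three rates add up to `(1 + α₁ + α₂) / D`: the `γ`- and
`θ`-terms only move revenue between miners. Hence `R_A = D · R₁ / (1 + α₁ + α₂)`, and in the
symmetric case with `γ = 1/2`, `θ = 1/3` this gives `R_A - α = α · p(α) / (6 (1 + 2α))` for the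
cubic `p(α) = -32α³ + 2α² + 13α - 3`. The cubic is increasing on `[0, 1/3]` with
`p(0.26) < 0 < p(0.28)`. -/

/-- N=2 selfish-mining model: Alice's valid-block rate. -/
noncomputable def R1N2 (a1 a2 g1 g2 t1 t2 : ℝ) : ℝ :=
  let h := 1 - a1 - a2
  (2*a1^2*(1+h) + (a2+h)*a1*h*g1 + a1*a2*h + 4*a1^2*a2*(1+h) + 2*a1*a2*h^2*t1)
    / (1 + a1 + a2 + a1*h + 2*a1*a2 + a2*h + 2*a1*a2*h)

/-- N=2 selfish-mining model: Bob's valid-block rate. -/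
noncomputable def R2N2 (a1 a2 g1 g2 t1 t2 : ℝ) : ℝ :=
  let h := 1 - a1 - a2
  (2*a2^2*(1+h) + (a1+h)*h*a2*g2 + a1*a2*h + 4*a2^2*a1*(1+h) + 2*a1*a2*h^2*t2)
    / (1 + a1 + a2 + a1*h + 2*a1*a2 + a2*h + 2*a1*a2*h)

/-- N=2 selfish-mining model: Henry's valid-block rate. -/
noncomputable def RhN2 (a1 a2 g1 g2 t1 t2 : ℝ) : ℝ :=
  let h := 1 - a1 - a2
  (h + a1*h^2*(2-g1) + a2*h^2*(2-g2) + 2*a1*a2*h^2*(2-t1-t2) + a1*a2*h*(2-g1-g2))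
    / (1 + a1 + a2 + a1*h + 2*a1*a2 + a2*h + 2*a1*a2*h)

/-- N=2 model: Alice's relative revenue R_A. -/
noncomputable def RA2 (a1 a2 g1 g2 t1 t2 : ℝ) : ℝ :=
  R1N2 a1 a2 g1 g2 t1 t2 /
    (R1N2 a1 a2 g1 g2 t1 t2 + R2N2 a1 a2 g1 g2 t1 t2 + RhN2 a1 a2 g1 g2 t1 t2)

/-- N=2 model: Bob's relative revenue R_B. -/
noncomputable def RB2 (a1 a2 g1 g2 t1 t2 : ℝ) : ℝ :=
  R2N2 a1 a2 g1 g2 t1 t2 /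
    (R1N2 a1 a2 g1 g2 t1 t2 + R2N2 a1 a2 g1 g2 t1 t2 + RhN2 a1 a2 g1 g2 t1 t2)

noncomputable def denomN2 (a1 a2 : ℝ) : ℝ :=
  let h := 1 - a1 - a2
  1 + a1 + a2 + a1*h + 2*a1*a2 + a2*h + 2*a1*a2*h

lemma denomN2_pos {a1 a2 : ℝ} (h1 : 0 ≤ a1) (h2 : 0 ≤ a2) (hh : 0 ≤ 1 - a1 - a2) :
    0 < denomN2 a1 a2 := by
  unfold denomN2
  positivity

lemma R1N2_add_R2N2_add_RhN2 (a1 a2 g1 g2 t1 t2 : ℝ) :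
    R1N2 a1 a2 g1 g2 t1 t2 + R2N2 a1 a2 g1 g2 t1 t2 + RhN2 a1 a2 g1 g2 t1 t2 =
      (1 + a1 + a2) / denomN2 a1 a2 := by
  simp only [R1N2, R2N2, RhN2, denomN2, ← add_div]
  congr 1
  ring

lemma RA2_eq_mul_R1N2 (a1 a2 g1 g2 t1 t2 : ℝ) :
    RA2 a1 a2 g1 g2 t1 t2 = denomN2 a1 a2 / (1 + a1 + a2) * R1N2 a1 a2 g1 g2 t1 t2 := by
  rw [RA2, R1N2_add_R2N2_add_RhN2, div_div_eq_mul_div]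
  ring

noncomputable def symmetricProfitPoly (a : ℝ) : ℝ := -32*a^3 + 2*a^2 + 13*a - 3

lemma RA2_symmetric_sub_self {a : ℝ} (h0 : 0 ≤ a) (hh : 0 ≤ 1 - a - a) :
    RA2 a a (1/2) (1/2) (1/3) (1/3) - a = a * symmetricProfitPoly a / (6 * (1 + 2*a)) := by
  have hD := (denomN2_pos h0 h0 hh).ne'
  rw [RA2_eq_mul_R1N2, R1N2, symmetricProfitPoly]
  rw [show denomN2 a a = 1 + 4*a - 4*a^3 by simp only [denomN2]; ring] at hD ⊢
  field_simp
  ring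

lemma symmetricProfitPoly_strictMonoOn : StrictMonoOn symmetricProfitPoly (Set.Icc 0 (1/3)) := by
  rintro x ⟨hx0, hx1⟩ y ⟨hy0, hy1⟩ hxy
  have hsq : x^2 + x*y + y^2 ≤ 1/3 := by nlinarith
  have hfactor : symmetricProfitPoly y - symmetricProfitPoly x =
      (y - x) * (13 + 2*(x + y) - 32*(x^2 + x*y + y^2)) := by
    unfold symmetricProfitPoly; ring
  nlinarith

lemma symmetricProfitPoly_at_026_neg : symmetricProfitPoly 0.26 < 0 := by
  norm_num [symmetricProfitPoly]

lemma symmetricProfitPoly_at_028_pos : 0 < symmetricProfitPoly 0.28 := by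
  norm_num [symmetricProfitPoly]

theorem n2_symmetric_threshold (α : ℝ) :
    ((0.28 ≤ α ∧ α < 1/3) → RA2 α α (1/2) (1/2) (1/3) (1/3) > α) ∧
    ((0 < α ∧ α ≤ 0.26) → RA2 α α (1/2) (1/2) (1/3) (1/3) < α) := by
  constructor
  · rintro ⟨hlo, hhi⟩
    have hpos : 0 < α := by linarith
    have hp : 0 < symmetricProfitPoly α :=
      symmetricProfitPoly_at_028_pos.trans_le <| symmetricProfitPoly_strictMonoOn.monotoneOn
        ⟨by norm_num, by norm_num⟩ ⟨hpos.le, hhi.le⟩ hlo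
    have hgain := RA2_symmetric_sub_self hpos.le (by linarith)
    have : 0 < α * symmetricProfitPoly α / (6 * (1 + 2*α)) := by positivity
    linarith
  · rintro ⟨hpos, hhi⟩
    have hp : symmetricProfitPoly α < 0 :=
      (symmetricProfitPoly_strictMonoOn.monotoneOn ⟨hpos.le, by linarith⟩
        ⟨by norm_num, by norm_num⟩ hhi).trans_lt symmetricProfitPoly_at_026_neg
    have hgain := RA2_symmetric_sub_self hpos.le (by linarith)
    have : α * symmetricProfitPoly α / (6 * (1 + 2*α)) < 0 :=
      div_neg_of_neg_of_pos (mul_neg_of_pos_of_neg hpos hp) (by positivity)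
    linarith
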